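/- arXiv:2111.05228 — 5 statements merged into one kernel-verified Lean document; each statement's English description precedes it below -/
import Mathlib

section
/- Let N be a positive integer and let ζ ∈ ℂ be a primitive N-th root of unity. Then there exists an integer k coprime to N such that ζ^(k²) = −ζ if and only if 16 divides N. -/
/-!
`ζ ^ (k²) = -ζ` means `ζ ^ (k² - 1) = -1`, and `ζ ^ m = -1` exactly when `2m` is an odd multiple
of `N`. So the condition reads `2 (k² - 1) = N t` with `t` odd. Then `N = 2M` is even, hence `k`
is odd and `8 ∣ k² - 1 = M t`, so `8 ∣ M`. Conversely, for `N = 16 n` the unit `k = 4n + 1`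
works, since `2 (k² - 1) = N (2n + 1)`.
-/

theorem Int.exists_odd_eq_mul_iff_dvd_two_mul_and_not_dvd {n m : ℤ} (hn : n ≠ 0) :
    (∃ t, Odd t ∧ 2 * m = n * t) ↔ n ∣ 2 * m ∧ ¬ n ∣ m := by
  constructor
  · rintro ⟨t, ht, h⟩
    refine ⟨⟨t, h⟩, ?_⟩
    rintro ⟨u, rfl⟩
    have : t = 2 * u := mul_left_cancel₀ hn (by rw [← h]; ring)
    exact Int.not_even_iff_odd.mpr ht (this ▸ even_two_mul u)
  · rintro ⟨⟨t, h⟩, hm⟩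
    refine ⟨t, Int.not_even_iff_odd.mp ?_, h⟩
    rintro ⟨u, rfl⟩
    exact hm ⟨u, by linarith⟩

theorem IsPrimitiveRoot.zpow_eq_neg_one_iff {K : Type*} [Field K] (hK : ringChar K ≠ 2)
    {ζ : K} {N : ℕ} (hζ : IsPrimitiveRoot ζ N) (hN : N ≠ 0) (m : ℤ) :
    ζ ^ m = -1 ↔ ∃ t, Odd t ∧ 2 * m = N * t := by
  rw [Int.exists_odd_eq_mul_iff_dvd_two_mul_and_not_dvd (by exact_mod_cast hN),
    ← hζ.zpow_eq_one_iff_dvd, ← hζ.zpow_eq_one_iff_dvd, mul_comm, zpow_mul, zpow_ofNat,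
    sq_eq_one_iff]
  constructor
  · intro h
    exact ⟨Or.inr h, h ▸ (Ring.neg_one_ne_one_of_char_ne_two hK)⟩
  · rintro ⟨h, hne⟩
    exact h.resolve_left hne

theorem Int.sixteen_dvd_of_two_mul_sq_sub_one_eq_mul_odd {n k t : ℤ} (hk : IsCoprime k n)
    (ht : Odd t) (h : 2 * (k ^ 2 - 1) = n * t) : 16 ∣ n := by
  obtain ⟨m, rfl⟩ : 2 ∣ n := by
    have : Even (n * t) := h ▸ even_two_mul _
    exact even_iff_two_dvd.mp ((Int.even_mul.mp this).resolve_right (Int.not_even_iff_odd.mpr ht))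
  have hk2 : Odd k := Int.isCoprime_two_right.mp (hk.of_mul_right_left)
  have h8 : 8 ∣ m * t := by
    have := Int.eight_dvd_sq_sub_one_of_odd hk2
    rwa [show k ^ 2 - 1 = m * t by linarith] at this
  have h8t : IsCoprime (8 : ℤ) t := by
    simpa using (Int.isCoprime_two_left.mpr ht).pow_left (m := 3)
  obtain ⟨u, rfl⟩ := h8t.dvd_of_dvd_mul_right h8
  exact ⟨u, by ring⟩

/-- Let `N` be a positive integer and `ζ ∈ ℂ` a primitive `N`-th root of
unity.  Then there exists an integer `k` coprime to `N` such that `ζ ^ (k²) = -ζ` if and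
only if `16 ∣ N`. -/
theorem primitiveRoot_squareGaloisConjugate_neg_iff_sixteen_dvd
    (N : ℕ) (hN : 0 < N) (ζ : ℂ) (hζ : IsPrimitiveRoot ζ N) :
    (∃ k : ℤ, IsCoprime k (N : ℤ) ∧ ζ ^ (k ^ 2) = -ζ) ↔ 16 ∣ N := by
  have hζ0 : ζ ≠ 0 := hζ.ne_zero hN.ne'
  have pow_sq_eq_neg_iff (k : ℤ) : ζ ^ (k ^ 2) = -ζ ↔ ∃ t, Odd t ∧ 2 * (k ^ 2 - 1) = N * t := by
    rw [← hζ.zpow_eq_neg_one_iff (by simp [ringChar.eq_zero]) hN.ne', zpow_sub_one₀ hζ0,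
      ← div_eq_mul_inv, div_eq_iff hζ0, neg_one_mul]
  simp_rw [pow_sq_eq_neg_iff]
  constructor
  · rintro ⟨k, hk, t, ht, h⟩
    exact_mod_cast Int.sixteen_dvd_of_two_mul_sq_sub_one_eq_mul_odd hk ht h
  · rintro ⟨n, rfl⟩
    exact ⟨4 * n + 1, ⟨1 - 4 * n, n, by push_cast; ring⟩, 2 * n + 1, odd_two_mul_add_one _,
      by push_cast; ring⟩
end

section
/- Let N be a positive integer, let K = ℚ(ζ_N) be the N-th cyclotomic field, and let ζ ∈ K be a primitive N-th root of unity. Then there exists a field automorphism σ of K over ℚ with σ(σ(ζ)) = −ζ if and only if 16 divides N. -/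
/-! Every `σ` acts on `ζ` as `ζ ↦ ζ ^ k` with `k` coprime to `N`, and every such `k` occurs,
so the question is whether `ζ ^ k ^ 2 = -ζ` for some unit `k`, i.e. `2 k² ≡ 2` but `k² ≢ 1`
modulo `N`. Then `N` divides `2 (k² - 1)` with odd cofactor, so `N` is even, `k` is odd,
`8 ∣ k² - 1`, and `N` inherits the factor `16` of `2 (k² - 1)`. Conversely, for `N = 16 m`
the exponent `k = 4 m + 1` works: `k² = 1 + 8 m + 16 m²` and `ζ ^ (8 m) = -1`. -/

open Polynomial

theorem Prime.pow_dvd_of_dvd_mul_of_not_dvd {R : Type*} [CommRing R] [IsDomain R] [IsBezout R]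
    {p n a : R} {j : ℕ} (hp : Prime p)
    (hj : p ^ j ∣ p * a) (hn : n ∣ p * a) (hna : ¬ n ∣ a) : p ^ j ∣ n := by
  obtain ⟨q, hq⟩ := hn
  have hpq : ¬ p ∣ q := by
    rintro ⟨r, rfl⟩
    exact hna ⟨r, mul_left_cancel₀ hp.ne_zero (by rw [hq]; ring)⟩
  exact ((hp.irreducible.coprime_iff_not_dvd.2 hpq).pow_left).dvd_of_dvd_mul_right (hq ▸ hj)

theorem Nat.sixteen_dvd_of_two_mul_sq_modEq {n k : ℕ} (hk : k.Coprime n)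
    (h2 : 2 * k ^ 2 ≡ 2 [MOD n]) (h1 : ¬ k ^ 2 ≡ 1 [MOD n]) : 16 ∣ n := by
  rw [Nat.ModEq.comm, Nat.modEq_iff_dvd] at h2 h1
  push_cast at h2 h1
  rw [← _root_.mul_sub_one] at h2
  have hn_even : 2 ∣ n := by
    exact_mod_cast Int.prime_two.pow_dvd_of_dvd_mul_of_not_dvd (j := 1) (by simp) h2 h1
  have hk_odd : Odd (k : ℤ) := by
    exact_mod_cast Nat.coprime_two_right.1 (hk.coprime_dvd_right hn_even)
  have h8 : (8 : ℤ) ∣ k ^ 2 - 1 := Int.eight_dvd_sq_sub_one_of_odd hk_odd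
  exact_mod_cast Int.prime_two.pow_dvd_of_dvd_mul_of_not_dvd (j := 4)
    (by simpa using mul_dvd_mul_left 2 h8) h2 h1

theorem IsPrimitiveRoot.pow_eq_neg_self_iff {R : Type*} [CommRing R] [IsDomain R] {ζ : R}
    {n k : ℕ} [NeZero n] (hζ : IsPrimitiveRoot ζ n) (h2 : (2 : R) ≠ 0) :
    ζ ^ k = -ζ ↔ 2 * k ≡ 2 [MOD n] ∧ ¬ k ≡ 1 [MOD n] := by
  have hpow : ∀ a b, ζ ^ a = ζ ^ b ↔ a ≡ b [MOD n] := by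
    rw [hζ.eq_orderOf]; exact fun a b => (hζ.isOfFinOrder (NeZero.ne n)).pow_eq_pow_iff_modEq
  have hne : -ζ ≠ ζ := by
    rw [Ne, neg_eq_iff_add_eq_zero, ← two_mul]
    exact mul_ne_zero h2 (hζ.ne_zero (NeZero.ne n))
  rw [← hpow, ← hpow, pow_one, mul_comm, pow_mul]
  refine ⟨fun h => ⟨by rw [h, neg_sq], h ▸ hne⟩, fun ⟨hsq, hk⟩ => ?_⟩
  exact (sq_eq_sq_iff_eq_or_eq_neg.1 hsq).resolve_left hk

theorem IsPrimitiveRoot.exists_coprime_pow_sq_eq_neg_iff {R : Type*} [CommRing R] [IsDomain R]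
    {ζ : R} {n : ℕ} [NeZero n] (hζ : IsPrimitiveRoot ζ n) (h2 : (2 : R) ≠ 0) :
    (∃ k, k.Coprime n ∧ ζ ^ k ^ 2 = -ζ) ↔ 16 ∣ n := by
  constructor
  · rintro ⟨k, hk, hζk⟩
    obtain ⟨h2k, hk1⟩ := (hζ.pow_eq_neg_self_iff h2).1 hζk
    exact Nat.sixteen_dvd_of_two_mul_sq_modEq hk h2k hk1
  · rintro ⟨m, rfl⟩
    refine ⟨4 * m + 1, ?_, ?_⟩
    · exact Nat.isCoprime_iff_coprime.1 ⟨1 - 4 * m, m, by push_cast; ring⟩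
    · have hneg : ζ ^ (8 * m) = -1 :=
        (hζ.pow (NeZero.pos _) (by ring)).eq_neg_one_of_two_right
      calc ζ ^ (4 * m + 1) ^ 2 = (ζ ^ (16 * m)) ^ m * ζ ^ (8 * m) * ζ := by ring
        _ = -ζ := by rw [hζ.pow_eq_one, hneg]; ring

theorem IsPrimitiveRoot.exists_coprime_algEquiv_apply_eq_pow {R S : Type*} [CommRing R]
    [CommRing S] [IsDomain S] [Algebra R S] {μ : S} {n : ℕ} [NeZero n]
    (hμ : IsPrimitiveRoot μ n) (σ : S ≃ₐ[R] S) : ∃ k, k.Coprime n ∧ σ μ = μ ^ k :=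
  ⟨_, ZMod.val_coe_unit_coprime _, (hμ.autToPow_spec R σ).symm⟩

theorem IsPrimitiveRoot.exists_algEquiv_apply_eq_pow {F L : Type*} [Field F] [Field L]
    [Algebra F L] {μ : L} {n k : ℕ} [IsCyclotomicExtension {n} F L]
    (hirr : Irreducible (cyclotomic n F)) (hμ : IsPrimitiveRoot μ n) (hk : k.Coprime n) :
    ∃ σ : L ≃ₐ[F] L, σ μ = μ ^ k := by
  have : NeZero n := ⟨by rintro rfl; simp at hirr⟩
  have := IsCyclotomicExtension.neZero' n F L
  have hμk := hμ.pow_of_coprime k hk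
  have hmin : minpoly F (hμ.powerBasis F).gen = minpoly F (hμk.powerBasis F).gen := by
    rw [powerBasis_gen, powerBasis_gen, ← hμ.minpoly_eq_cyclotomic_of_irreducible hirr,
      ← hμk.minpoly_eq_cyclotomic_of_irreducible hirr]
  have hgen := (hμ.powerBasis F).equivOfMinpoly_gen (hμk.powerBasis F) hmin
  rw [powerBasis_gen, powerBasis_gen] at hgen
  exact ⟨_, hgen⟩

/-- Let `N` be a positive integer, `K = ℚ(ζ_N)` the `N`-th cyclotomic
field, and `ζ ∈ K` a primitive `N`-th root of unity.  Then there exists a field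
automorphism `σ` of `K` over `ℚ` with `σ (σ ζ) = -ζ` if and only if `16 ∣ N`. -/
theorem cyclotomic_exists_sq_aut_neg_iff_sixteen_dvd
    (N : ℕ+) (K : Type) [Field K] [Algebra ℚ K] [IsCyclotomicExtension {(N : ℕ)} ℚ K]
    (ζ : K) (hζ : IsPrimitiveRoot ζ (N : ℕ)) :
    (∃ σ : K ≃ₐ[ℚ] K, σ (σ ζ) = -ζ) ↔ 16 ∣ (N : ℕ) := by
  have := charZero_of_injective_algebraMap (algebraMap ℚ K).injective
  rw [← hζ.exists_coprime_pow_sq_eq_neg_iff two_ne_zero]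
  constructor
  · rintro ⟨σ, hσ⟩
    obtain ⟨k, hk, hσζ⟩ := hζ.exists_coprime_algEquiv_apply_eq_pow σ
    exact ⟨k, hk, by rw [← hσ, hσζ, map_pow, hσζ, ← pow_mul, sq]⟩
  · rintro ⟨k, hk, hζk⟩
    obtain ⟨σ, hσζ⟩ := hζ.exists_algEquiv_apply_eq_pow (cyclotomic.irreducible_rat N.pos) hk
    exact ⟨σ, by rw [hσζ, map_pow, hσζ, ← pow_mul, ← sq, hζk]⟩
end

section
/- Let N be a positive even integer. Then there exists an integer a coprime to N with a² ≡ N/2 + 1 (mod N) if and only if 16 divides N. -/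
/-- Let `N` be a positive even integer.  Then there exists an integer `a`
coprime to `N` with `a² ≡ N/2 + 1 (mod N)` if and only if `16 ∣ N`. -/
theorem exists_sq_unit_cong_half_add_one_iff_sixteen_dvd
    (N : ℕ) (hN : 0 < N) (hNeven : 2 ∣ N) :
    (∃ a : ℤ, IsCoprime a (N : ℤ) ∧ a ^ 2 ≡ (N : ℤ) / 2 + 1 [ZMOD (N : ℤ)]) ↔ 16 ∣ N := by
  obtain ⟨M, rfl⟩ := hNeven
  have hM2 : ((2 * M : ℕ) : ℤ) / 2 = (M : ℤ) := by push_cast; omega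
  constructor
  · rintro ⟨a, hcop, hmod⟩
    -- `a` is odd
    have hodd : Odd a := by
      rw [Int.not_even_iff_odd.symm]
      intro ⟨c, hc⟩
      have h2 : (2 : ℤ) ∣ a := ⟨c, by omega⟩
      have h2' : (2 : ℤ) ∣ ((2 * M : ℕ) : ℤ) := by push_cast; exact ⟨M, by ring⟩
      have := Int.isUnit_iff.mp (hcop.isUnit_of_dvd' h2 h2')
      omega
    obtain ⟨k, hk⟩ := hodd
    have hdvd : ((2 * M : ℕ) : ℤ) ∣ ((2 * M : ℕ) : ℤ) / 2 + 1 - a ^ 2 := hmod.dvd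
    rw [hM2] at hdvd
    obtain ⟨t, ht⟩ := hdvd
    obtain ⟨m, hm⟩ := Int.even_mul_succ_self k
    have hNval : ((2 * M : ℕ) : ℤ) = 2 * (M : ℤ) := by push_cast; ring
    rw [hNval, hk] at ht
    have h8 : (8 : ℤ) ∣ (M : ℤ) * (1 - 2 * t) := ⟨m, by linear_combination ht + 4 * hm⟩
    have hcop8 : IsCoprime (8 : ℤ) (1 - 2 * t) := by
      have h2 : IsCoprime (2 : ℤ) (1 - 2 * t) := ⟨t, 1, by ring⟩
      have h8' : IsCoprime ((2:ℤ)^3) (1 - 2 * t) := h2.pow_left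
      norm_num at h8'
      exact h8'
    have h8M : (8 : ℤ) ∣ (M : ℤ) := hcop8.dvd_of_dvd_mul_right h8
    have h8M' : (8 : ℕ) ∣ M := by exact_mod_cast h8M
    omega
  · rintro ⟨n, hn⟩
    refine ⟨4 * (n : ℤ) + 1, ⟨1 - 4 * n, n, ?_⟩, ?_⟩
    · have : ((2 * M : ℕ) : ℤ) = 16 * (n : ℤ) := by
        have : 2 * M = 16 * n := hn
        rw [this]; push_cast; ring
      rw [this]; ring
    · rw [Int.modEq_iff_dvd]
      have hNv : ((2 * M : ℕ) : ℤ) = 16 * (n : ℤ) := by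
        have : 2 * M = 16 * n := hn
        rw [this]; push_cast; ring
      rw [hNv]
      have hdiv : (16 * (n : ℤ)) / 2 = 8 * n := by omega
      exact ⟨-n, by rw [hdiv]; ring⟩
end

section
/- Let n and d be positive integers, let t : Fin d → ℂ be injective, let T denote the (nd)×(nd) complex matrix (with rows and columns indexed by Fin n × Fin d) which is the block-diagonal matrix consisting of n copies of the diagonal matrix diag(t(0),…,t(d−1)), and let P be an invertible (nd)×(nd) complex matrix commuting with T. Then for every d×d complex matrix S, the matrix M = P · B(S) · P⁻¹, where B(S) is the block-diagonal matrix consisting of n copies of S, satisfies M_{(j,x),(k,x)} = 0 for all j ≠ k in Fin n and all x in Fin d. -/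
/-- The block-diagonal matrix, indexed by `Fin n × Fin d` (block index first), consisting
of `n` copies of a `d × d` complex matrix `S`. -/
def blockCopies (n d : ℕ) (S : Matrix (Fin d) (Fin d) ℂ) :
    Matrix (Fin n × Fin d) (Fin n × Fin d) ℂ :=
  Matrix.of fun p q => if p.1 = q.1 then S p.2 q.2 else 0

lemma blockCopies_diagonal (n d : ℕ) (t : Fin d → ℂ) :
    blockCopies n d (Matrix.diagonal t)
      = Matrix.diagonal (fun p : Fin n × Fin d => t p.2) := by
  ext ⟨j, x⟩ ⟨k, y⟩
  simp only [blockCopies, Matrix.of_apply, Matrix.diagonal, Prod.mk.injEq]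
  by_cases h1 : j = k <;> by_cases h2 : x = y <;> simp [h1, h2]

lemma entry_zero_of_commute {n d : ℕ} (t : Fin d → ℂ) (ht : Function.Injective t)
    (A : Matrix (Fin n × Fin d) (Fin n × Fin d) ℂ)
    (hA : A * Matrix.diagonal (fun p : Fin n × Fin d => t p.2)
        = Matrix.diagonal (fun p : Fin n × Fin d => t p.2) * A)
    {p q : Fin n × Fin d} (h : p.2 ≠ q.2) : A p q = 0 := by
  have he : A p q * t q.2 = t p.2 * A p q := by
    have := congrFun (congrFun hA p) q
    rwa [Matrix.mul_diagonal, Matrix.diagonal_mul] at this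
  have hz : A p q * (t q.2 - t p.2) = 0 := by ring_nf; linear_combination he
  rcases mul_eq_zero.mp hz with h' | h'
  · exact h'
  · exact absurd (ht (sub_eq_zero.mp h')) (fun e => h e.symm)

/-- Let `n, d` be positive integers, `t : Fin d → ℂ` injective, `T` the
`(nd) × (nd)` block-diagonal matrix of `n` copies of `diag (t 0, …, t (d-1))`, and `P` an
invertible `(nd) × (nd)` matrix commuting with `T`.  Then for every `d × d` matrix `S`,
the matrix `M = P * B(S) * P⁻¹` (with `B(S)` the block diagonal of `n` copies of `S`)
satisfies `M (j, x) (k, x) = 0` for all `j ≠ k` and all `x`. -/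
theorem conj_blockDiagonal_offDiagonalBlock_diag_entry_eq_zero
    (n d : ℕ) (hn : 0 < n) (hd : 0 < d) (t : Fin d → ℂ) (ht : Function.Injective t)
    (P : Matrix (Fin n × Fin d) (Fin n × Fin d) ℂ) (hP : IsUnit P)
    (hPT : P * blockCopies n d (Matrix.diagonal t)
        = blockCopies n d (Matrix.diagonal t) * P)
    (S : Matrix (Fin d) (Fin d) ℂ) :
    ∀ (j k : Fin n) (x : Fin d), j ≠ k →
      (P * blockCopies n d S * P⁻¹) (j, x) (k, x) = 0 := by
  intro j k x hjk
  have hPdet : IsUnit P.det := (Matrix.isUnit_iff_isUnit_det P).mp hP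
  have hPPinv : P * P⁻¹ = 1 := Matrix.mul_nonsing_inv P hPdet
  have hPinvP : P⁻¹ * P = 1 := Matrix.nonsing_inv_mul P hPdet
  rw [blockCopies_diagonal] at hPT
  -- P⁻¹ also commutes with the diagonal
  have hQT : P⁻¹ * Matrix.diagonal (fun p : Fin n × Fin d => t p.2)
      = Matrix.diagonal (fun p : Fin n × Fin d => t p.2) * P⁻¹ := by
    calc P⁻¹ * Matrix.diagonal (fun p : Fin n × Fin d => t p.2)
        = P⁻¹ * Matrix.diagonal (fun p : Fin n × Fin d => t p.2) * (P * P⁻¹) := by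
          rw [hPPinv, Matrix.mul_one]
      _ = P⁻¹ * (Matrix.diagonal (fun p : Fin n × Fin d => t p.2) * P) * P⁻¹ := by
          noncomm_ring
      _ = P⁻¹ * (P * Matrix.diagonal (fun p : Fin n × Fin d => t p.2)) * P⁻¹ := by
          rw [hPT]
      _ = Matrix.diagonal (fun p : Fin n × Fin d => t p.2) * P⁻¹ := by
          rw [← Matrix.mul_assoc, Matrix.mul_assoc P⁻¹ P, ← Matrix.mul_assoc P⁻¹ P,
            hPinvP, Matrix.one_mul]
  have hPz : ∀ {p q : Fin n × Fin d}, p.2 ≠ q.2 → P p q = 0 :=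
    fun h => entry_zero_of_commute t ht P hPT h
  have hQz : ∀ {p q : Fin n × Fin d}, p.2 ≠ q.2 → P⁻¹ p q = 0 :=
    fun h => entry_zero_of_commute t ht P⁻¹ hQT h
  rw [Matrix.mul_assoc, Matrix.mul_apply]
  have key : ∀ a : Fin n × Fin d,
      P (j, x) a * (blockCopies n d S * P⁻¹) a (k, x)
        = S x x * (P (j, x) a * P⁻¹ a (k, x)) := by
    intro a
    by_cases hax : a.2 = x
    · rw [Matrix.mul_apply]
      have : ∑ q, blockCopies n d S a q * P⁻¹ q (k, x)
          = S x x * P⁻¹ a (k, x) := by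
        rw [Finset.sum_eq_single a]
        · simp [blockCopies, hax]
        · intro q _ hq
          by_cases h1 : a.1 = q.1
          · have h2 : a.2 ≠ q.2 := fun h2 => hq (Prod.ext h1 h2).symm
            have : P⁻¹ q (k, x) = 0 :=
              hQz (show q.2 ≠ x from fun h => h2 (by rw [hax, h]))
            simp [this]
          · simp [blockCopies, h1]
        · simp
      rw [this]; ring
    · rw [hPz (show x ≠ a.2 from fun h => hax h.symm)]; ring
  rw [Finset.sum_congr rfl (fun a _ => key a), ← Finset.mul_sum, ← Matrix.mul_apply,
    hPPinv]
  have : (1 : Matrix (Fin n × Fin d) (Fin n × Fin d) ℂ) (j, x) (k, x) = 0 := by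
    simp [Matrix.one_apply, Prod.ext_iff, hjk]
  rw [this, mul_zero]
end

section
/- Let n ≥ 2 and d ≥ 1 be integers, let t : Fin d → ℂ be injective, let T denote the (nd)×(nd) complex matrix (with rows and columns indexed by Fin n × Fin d) which is the block-diagonal matrix consisting of n copies of the diagonal matrix diag(t(0),…,t(d−1)), and let P be an invertible (nd)×(nd) complex matrix commuting with T. Then for every d×d complex matrix S, every row of the matrix M = P · B(S) · P⁻¹, where B(S) is the block-diagonal matrix consisting of n copies of S, contains at least one zero entry; in particular no row of M has all of its entries nonzero. -/
lemma blockCopies_diag_apply (n d : ℕ) (t : Fin d → ℂ) (r q : Fin n × Fin d) :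
    blockCopies n d (Matrix.diagonal t) r q = if r = q then t q.2 else 0 := by
  simp only [blockCopies, Matrix.of_apply, Matrix.diagonal_apply, Prod.ext_iff]
  by_cases h1 : r.1 = q.1 <;> by_cases h2 : r.2 = q.2 <;> simp [h1, h2]

lemma comm_struct (n d : ℕ) (t : Fin d → ℂ) (ht : Function.Injective t)
    (P : Matrix (Fin n × Fin d) (Fin n × Fin d) ℂ)
    (hPT : P * blockCopies n d (Matrix.diagonal t)
        = blockCopies n d (Matrix.diagonal t) * P)
    (p q : Fin n × Fin d) (h : p.2 ≠ q.2) : P p q = 0 := by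
  have h1 := congrFun (congrFun hPT p) q
  simp only [Matrix.mul_apply, blockCopies_diag_apply] at h1
  rw [Finset.sum_congr rfl (fun r _ => mul_ite (r = q) (P p r) (t q.2) 0),
      Finset.sum_congr rfl (fun r _ => ite_mul (p = r) (t r.2) 0 (P r q))] at h1
  simp only [mul_zero, zero_mul, Finset.sum_ite_eq', Finset.sum_ite_eq,
    Finset.mem_univ, if_true] at h1
  have : P p q * (t q.2 - t p.2) = 0 := by ring_nf; linear_combination h1
  rcases mul_eq_zero.mp this with h2 | h2
  · exact h2
  · exact absurd (ht (sub_eq_zero.mp h2)).symm h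

/-- Let `n ≥ 2` and `d ≥ 1`, let `t : Fin d → ℂ` be injective, let `T`
be the `(nd) × (nd)` block-diagonal matrix of `n` copies of `diag (t 0, …, t (d-1))`, and
let `P` be an invertible `(nd) × (nd)` matrix commuting with `T`.  Then for every `d × d`
matrix `S`, every row of `M = P * B(S) * P⁻¹` contains at least one zero entry; in
particular no row of `M` has all of its entries nonzero. -/
theorem conj_blockDiagonal_every_row_has_zero_entry
    (n d : ℕ) (hn : 2 ≤ n) (hd : 1 ≤ d) (t : Fin d → ℂ) (ht : Function.Injective t)
    (P : Matrix (Fin n × Fin d) (Fin n × Fin d) ℂ) (hP : IsUnit P)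
    (hPT : P * blockCopies n d (Matrix.diagonal t)
        = blockCopies n d (Matrix.diagonal t) * P)
    (S : Matrix (Fin d) (Fin d) ℂ) :
    (∀ p : Fin n × Fin d, ∃ q : Fin n × Fin d,
        (P * blockCopies n d S * P⁻¹) p q = 0) ∧
      ¬ ∃ p : Fin n × Fin d, ∀ q : Fin n × Fin d,
        (P * blockCopies n d S * P⁻¹) p q ≠ 0 := by
  have hdet : IsUnit P.det := (Matrix.isUnit_iff_isUnit_det P).mp hP
  have hPPinv : P * P⁻¹ = 1 := Matrix.mul_nonsing_inv P hdet
  have hPinvP : P⁻¹ * P = 1 := Matrix.nonsing_inv_mul P hdet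
  -- P⁻¹ commutes with T
  have hPT' : P⁻¹ * blockCopies n d (Matrix.diagonal t)
      = blockCopies n d (Matrix.diagonal t) * P⁻¹ := by
    calc P⁻¹ * blockCopies n d (Matrix.diagonal t)
        = P⁻¹ * blockCopies n d (Matrix.diagonal t) * (P * P⁻¹) := by rw [hPPinv, mul_one]
      _ = P⁻¹ * (blockCopies n d (Matrix.diagonal t) * P) * P⁻¹ := by
          simp only [mul_assoc]
      _ = P⁻¹ * (P * blockCopies n d (Matrix.diagonal t)) * P⁻¹ := by rw [hPT]
      _ = (P⁻¹ * P) * blockCopies n d (Matrix.diagonal t) * P⁻¹ := by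
          simp only [mul_assoc]
      _ = blockCopies n d (Matrix.diagonal t) * P⁻¹ := by rw [hPinvP, one_mul]
  have hPz := comm_struct n d t ht P hPT
  have hPiz := comm_struct n d t ht P⁻¹ hPT'
  have main : ∀ p : Fin n × Fin d, ∃ q : Fin n × Fin d,
      (P * blockCopies n d S * P⁻¹) p q = 0 := by
    intro p
    haveI : Nontrivial (Fin n) := Fin.nontrivial_iff_two_le.mpr hn
    obtain ⟨m, hm⟩ := exists_ne p.1
    refine ⟨(m, p.2), ?_⟩
    have key : (P * blockCopies n d S * P⁻¹) p (m, p.2)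
        = S p.2 p.2 * (P * P⁻¹) p (m, p.2) := by
      rw [Matrix.mul_apply, Matrix.mul_apply, Finset.mul_sum]
      refine Finset.sum_congr rfl fun r _ => ?_
      by_cases hr : r.2 = p.2
      · have hPB : (P * blockCopies n d S) p r = P p r * S p.2 p.2 := by
          rw [Matrix.mul_apply]
          rw [Finset.sum_eq_single (r.1, p.2)]
          · have : r = (r.1, p.2) := Prod.ext rfl hr
            rw [← this]
            simp [blockCopies, hr]
          · intro s _ hs
            by_cases hs2 : s.2 = p.2
            · have hs1 : s.1 ≠ r.1 := by
                intro h; exact hs (Prod.ext h hs2)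
              simp [blockCopies, hs1]
            · rw [hPz p s (fun h => hs2 h.symm), zero_mul]
          · intro h; exact absurd (Finset.mem_univ _) h
        rw [hPB]; ring
      · rw [hPiz r (m, p.2) hr, mul_zero, mul_zero, mul_zero]
    rw [key, hPPinv]
    have : p ≠ (m, p.2) := by
      intro h; exact hm (congrArg Prod.fst h).symm
    simp [Matrix.one_apply_ne this]
  refine ⟨main, ?_⟩
  rintro ⟨p, hp⟩
  obtain ⟨q, hq⟩ := main p
  exact hp q hq
end
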